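/- Let $(R,\mathfrak{m},k)$ be a commutative Noetherian local ring and let $(M_i)_{i \in I}$ be a family of $\mathfrak{m}$-adically complete $R$-modules. Then the product $\prod_{i \in I} M_i$ is $\mathfrak{m}$-adically complete. -/

import Mathlib

/-!
Completeness of `∏ Mᵢ` is checked coordinatewise. The one point that is not formal is
`𝔪ⁿ • ∏ Mᵢ = ∏ (𝔪ⁿ • Mᵢ)`: if `𝔪ⁿ = (a₁, …, aₖ)` and each coordinate is `∑ⱼ aⱼ mᵢⱼ`, then the
element itself is `∑ⱼ aⱼ (mᵢⱼ)ᵢ`, which needs `𝔪ⁿ` to be finitely generated (Noetherianity).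
-/

open CategoryTheory IsLocalRing

universe u

noncomputable section

/-- `Ext^i_R(M,N)` as a module, via the derived functor `Ext` on `ModuleCat R`. -/
def eExt (R : Type u) [CommRing R] (i : ℕ) (M N : Type u)
    [AddCommGroup M] [Module R M] [AddCommGroup N] [Module R N] : ModuleCat R :=
  ((Ext R (ModuleCat.{u} R) i).obj (Opposite.op (ModuleCat.of R M))).obj (ModuleCat.of R N)

/-- `Tor_i^R(M,N)` as a module, via the derived functor `Tor` on `ModuleCat R`. -/
def eTor (R : Type u) [CommRing R] (i : ℕ) (M N : Type u)
    [AddCommGroup M] [Module R M] [AddCommGroup N] [Module R N] : ModuleCat R :=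
  ((Tor (ModuleCat.{u} R) i).obj (ModuleCat.of R M)).obj (ModuleCat.of R N)

/-- depth of a module over a local ring: `inf {i | Ext^i(k, M) ≠ 0}`, `⊤` if none. -/
def eDepth (R : Type u) [CommRing R] [IsLocalRing R] (M : Type u)
    [AddCommGroup M] [Module R M] : ℕ∞ :=
  ⨅ (i : ℕ) (_ : Nontrivial (eExt R i (ResidueField R) M)), (i : ℕ∞)

/-- width of a module over a local ring: `inf {i | Tor_i(k, M) ≠ 0}`, `⊤` if none. -/
def eWidth (R : Type u) [CommRing R] [IsLocalRing R] (M : Type u)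
    [AddCommGroup M] [Module R M] : ℕ∞ :=
  ⨅ (i : ℕ) (_ : Nontrivial (eTor R i (ResidueField R) M)), (i : ℕ∞)

/-- A finitely generated module is totally reflexive (G-dimension zero) iff it is
reflexive and `Ext^i(M,R) = 0 = Ext^i(M^*, R)` for all `i ≥ 1`. -/
def IsTotallyReflexive (R : Type u) [CommRing R] (M : Type u)
    [AddCommGroup M] [Module R M] : Prop :=
  Module.Finite R M ∧ Module.IsReflexive R M ∧
    ∀ i : ℕ, 1 ≤ i →
      Subsingleton (eExt R i M R) ∧ Subsingleton (eExt R i (Module.Dual R M) R)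

/-- A list of elements is a system of parameters of a local ring. -/
def IsSOP (R : Type u) [CommRing R] [IsLocalRing R] (xs : List R) : Prop :=
  (∀ x ∈ xs, x ∈ maximalIdeal R) ∧
    ((xs.length : WithBot ℕ∞) = ringKrullDim R) ∧
    maximalIdeal R ≤ (Ideal.span {x | x ∈ xs}).radical

/-- A big Cohen-Macaulay module: some system of parameters is a regular sequence on it. -/
def IsBigCM (R : Type u) [CommRing R] [IsLocalRing R] (B : Type u)
    [AddCommGroup B] [Module R B] : Prop :=
  ∃ xs : List R, IsSOP R xs ∧ RingTheory.Sequence.IsRegular B xs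

/-- A module is Gorenstein injective if it is a cosyzygy of a totally acyclic complex of
injectives: an exact complex `I` of injective modules with `N ≅ im(I₁ → I₀)` such that
`Hom(E, I)` is exact for every injective module `E`. -/
def IsGorensteinInjective (R : Type u) [CommRing R] (N : Type u)
    [AddCommGroup N] [Module R N] : Prop :=
  ∃ I : ChainComplex (ModuleCat.{u} R) ℤ,
    (∀ i, CategoryTheory.Injective (I.X i)) ∧
    (∀ i, Subsingleton (I.homology i)) ∧
    Nonempty (N ≃ₗ[R] LinearMap.range ((I.d 1 0).hom : I.X 1 →ₗ[R] I.X 0)) ∧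
    ∀ (E : ModuleCat.{u} R), CategoryTheory.Injective E →
      ∀ (i : ℤ) (f : E ⟶ I.X i), f ≫ I.d i (i - 1) = 0 →
        ∃ g : E ⟶ I.X (i + 1), g ≫ I.d (i + 1) i = f

/-- A module has finite projective dimension: for some `n`, `Ext^i(M, -)` vanishes
for all `i > n`. -/
def HasFiniteProjDim (R : Type u) [CommRing R] (M : Type u)
    [AddCommGroup M] [Module R M] : Prop :=
  ∃ n : ℕ, ∀ (N : ModuleCat.{u} R) (i : ℕ), n < i →
    Subsingleton (((Ext R (ModuleCat.{u} R) i).obj (Opposite.op (ModuleCat.of R M))).obj N)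

end

namespace Submodule

variable {R : Type*} [CommRing R]

theorem mem_span_range_smul_top_iff {M : Type*} [AddCommGroup M] [Module R M] {k : ℕ}
    (a : Fin k → R) (x : M) :
    x ∈ Ideal.span (Set.range a) • (⊤ : Submodule R M) ↔ ∃ m : Fin k → M, ∑ j, a j • m j = x := by
  constructor
  · intro hx
    refine smul_induction_on hx (fun r hr n _ => ?_) ?_
    · obtain ⟨c, rfl⟩ := (mem_span_range_iff_exists_fun R).1 hr
      refine ⟨fun j => c j • n, ?_⟩
      simp only [Finset.sum_smul, smul_smul, smul_eq_mul, mul_comm]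
    · rintro _ _ ⟨mx, rfl⟩ ⟨my, rfl⟩
      exact ⟨mx + my, by simp only [Pi.add_apply, smul_add, Finset.sum_add_distrib]⟩
  · rintro ⟨m, rfl⟩
    exact Submodule.sum_mem _ fun j _ => smul_mem_smul (Ideal.subset_span ⟨j, rfl⟩) mem_top

variable {ι : Type*} {M : ι → Type*} [∀ i, AddCommGroup (M i)] [∀ i, Module R (M i)]

theorem apply_mem_smul_top_of_mem {J : Ideal R} {x : ∀ i, M i}
    (hx : x ∈ J • (⊤ : Submodule R (∀ i, M i))) (i : ι) :
    x i ∈ J • (⊤ : Submodule R (M i)) := by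
  refine smul_induction_on hx (fun r hr y _ => ?_) fun _ _ => add_mem
  exact smul_mem_smul hr mem_top

theorem mem_smul_top_of_forall_apply_mem {J : Ideal R} (hJ : J.FG) {x : ∀ i, M i}
    (hx : ∀ i, x i ∈ J • (⊤ : Submodule R (M i))) :
    x ∈ J • (⊤ : Submodule R (∀ i, M i)) := by
  obtain ⟨k, a, rfl⟩ := fg_iff_exists_fin_generating_family.1 hJ
  choose m hm using fun i => (mem_span_range_smul_top_iff a (x i)).1 (hx i)
  refine (mem_span_range_smul_top_iff a x).2 ⟨fun j i => m i j, funext fun i => ?_⟩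
  simpa using hm i

end Submodule

section Pi

variable {R : Type*} [CommRing R] {I : Ideal R}
  {ι : Type*} {M : ι → Type*} [∀ i, AddCommGroup (M i)] [∀ i, Module R (M i)]

theorem SModEq.pi_apply {x y : ∀ i, M i} {n : ℕ}
    (h : x ≡ y [SMOD (I ^ n • ⊤ : Submodule R (∀ i, M i))]) (i : ι) :
    x i ≡ y i [SMOD (I ^ n • ⊤ : Submodule R (M i))] := by
  rw [SModEq.sub_mem] at h ⊢
  exact Submodule.apply_mem_smul_top_of_mem h i

theorem SModEq.pi (hI : I.FG) {x y : ∀ i, M i} {n : ℕ}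
    (h : ∀ i, x i ≡ y i [SMOD (I ^ n • ⊤ : Submodule R (M i))]) :
    x ≡ y [SMOD (I ^ n • ⊤ : Submodule R (∀ i, M i))] := by
  simp only [SModEq.sub_mem] at h ⊢
  exact Submodule.mem_smul_top_of_forall_apply_mem hI.pow h

instance IsHausdorff.pi [∀ i, IsHausdorff I (M i)] : IsHausdorff I (∀ i, M i) where
  haus' x hx := _root_.funext fun i => IsHausdorff.haus' (x i) fun n => (hx n).pi_apply i

theorem IsPrecomplete.pi (hI : I.FG) [∀ i, IsPrecomplete I (M i)] :
    IsPrecomplete I (∀ i, M i) where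
  prec' f hf := by
    choose L hL using fun i =>
      IsPrecomplete.prec' (I := I) (fun n => f n i) fun hmn => (hf hmn).pi_apply i
    exact ⟨L, fun n => SModEq.pi hI fun i => hL i n⟩

theorem IsAdicComplete.pi (hI : I.FG) [∀ i, IsAdicComplete I (M i)] :
    IsAdicComplete I (∀ i, M i) where
  toIsPrecomplete := IsPrecomplete.pi hI

end Pi

theorem stmt_4 (R : Type u) [CommRing R] [IsLocalRing R] [IsNoetherianRing R]
    (ι : Type u) (M : ι → Type u) [∀ i, AddCommGroup (M i)] [∀ i, Module R (M i)]
    [∀ i, IsAdicComplete (maximalIdeal R) (M i)] :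
    IsAdicComplete (maximalIdeal R) (∀ i, M i) :=
  IsAdicComplete.pi (IsNoetherian.noetherian _)
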